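/- arXiv:1801.04791 — 3 statements merged into one kernel-verified Lean document; each statement's English description precedes it below -/
import Mathlib

section
/- For θ = arctan(v/u), θ_ma = arctan(c/sqrt(q²-c²)) with u > c > 0 and q² = u²+v², the partial derivative of λⱼ = tan(θ + (-1)^{σ(j)} θ_ma) with respect to u equals -sec²(θ + (-1)^{σ(j)} θ_ma)·sin(θ + (-1)^{σ(j)} θ_ma)/sqrt(q²-c²), and with respect to v equals sec²(θ + (-1)^{σ(j)} θ_ma)·cos(θ + (-1)^{σ(j)} θ_ma)/sqrt(q²-c²), where σ(1)=1 and σ(3)=0 and c is held fixed. -/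
/-!
Both angles in `Θ = arctan (v / u) + arctan (d / s)`, with `d = ±c` and `s = √(q² - d²)`, have
hypotenuse `q = √(u² + v²)`, so `sin Θ = (v s + u d) / q²` and `cos Θ = (u s - v d) / q²`.
Differentiating the two arctangents of quotients gives `∂Θ/∂u = -(v s + u d) / (s q²) = -sin Θ / s`
and `∂Θ/∂v = (u s - v d) / (s q²) = cos Θ / s`, and the chain rule for `tan` finishes. The sign
`(-1)^{σ(j)}` is absorbed into `d` because `arctan` is odd.
-/

open Real

namespace Real

lemma sin_arctan_div {a b : ℝ} (hb : 0 < b) : sin (arctan (a / b)) = a / √(a ^ 2 + b ^ 2) := by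
  rw [sin_arctan, show 1 + (a / b) ^ 2 = (a ^ 2 + b ^ 2) / b ^ 2 by field_simp; ring,
    sqrt_div' _ (sq_nonneg b), sqrt_sq hb.le]
  field_simp

lemma cos_arctan_div {a b : ℝ} (hb : 0 < b) : cos (arctan (a / b)) = b / √(a ^ 2 + b ^ 2) := by
  rw [cos_arctan, show 1 + (a / b) ^ 2 = (a ^ 2 + b ^ 2) / b ^ 2 by field_simp; ring,
    sqrt_div' _ (sq_nonneg b), sqrt_sq hb.le]
  field_simp

lemma mul_arctan_of_eq_one_or_eq_neg_one {e : ℝ} (he : e = 1 ∨ e = -1) (x : ℝ) :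
    e * arctan x = arctan (e * x) := by
  rcases he with rfl | rfl <;> simp [arctan_neg]

end Real

lemma HasDerivAt.arctan_div {f g : ℝ → ℝ} {f' g' x : ℝ} (hf : HasDerivAt f f' x)
    (hg : HasDerivAt g g' x) (hgx : g x ≠ 0) :
    HasDerivAt (fun y => Real.arctan (f y / g y))
      ((f' * g x - f x * g') / (f x ^ 2 + g x ^ 2)) x := by
  convert (hf.fun_div hg hgx).arctan using 1
  field_simp
  ring

lemma HasDerivAt.tan {f : ℝ → ℝ} {f' x : ℝ} (hf : HasDerivAt f f' x) (hx : Real.cos (f x) ≠ 0) :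
    HasDerivAt (fun y => Real.tan (f y)) (1 / Real.cos (f x) ^ 2 * f') x :=
  (hasDerivAt_tan hx).comp x hf

/-- Flow angle `arctan (v / u)` plus the signed Mach angle `arctan (d / √(q² - d²))`, `q² = u² + v²`;
the paper's `θ + (-1)^{σ(j)} θ_ma` is `characteristicAngle ((-1)^{σ(j)} c) u v`. -/
noncomputable def characteristicAngle (d u v : ℝ) : ℝ :=
  arctan (v / u) + arctan (d / √(u ^ 2 + v ^ 2 - d ^ 2))

section characteristicAngle

variable {d u v : ℝ}

lemma sq_add_sq_sub_sq_pos (hd : d ^ 2 < u ^ 2) : 0 < u ^ 2 + v ^ 2 - d ^ 2 := by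
  nlinarith [sq_nonneg v]

lemma sq_add_sqrt_sq_add_sq_sub_sq (hd : d ^ 2 < u ^ 2) :
    d ^ 2 + √(u ^ 2 + v ^ 2 - d ^ 2) ^ 2 = v ^ 2 + u ^ 2 := by
  rw [sq_sqrt (sq_add_sq_sub_sq_pos hd).le]
  ring

lemma sin_characteristicAngle (hu : 0 < u) (hd : d ^ 2 < u ^ 2) :
    sin (characteristicAngle d u v) = (v * √(u ^ 2 + v ^ 2 - d ^ 2) + u * d) / (u ^ 2 + v ^ 2) := by
  have hs := sqrt_pos.2 (sq_add_sq_sub_sq_pos (v := v) hd)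
  rw [characteristicAngle, sin_add, sin_arctan_div hu, cos_arctan_div hu, sin_arctan_div hs,
    cos_arctan_div hs, sq_add_sqrt_sq_add_sq_sub_sq hd]
  field_simp
  rw [sq_sqrt (by positivity)]
  ring

lemma cos_characteristicAngle (hu : 0 < u) (hd : d ^ 2 < u ^ 2) :
    cos (characteristicAngle d u v) = (u * √(u ^ 2 + v ^ 2 - d ^ 2) - v * d) / (u ^ 2 + v ^ 2) := by
  have hs := sqrt_pos.2 (sq_add_sq_sub_sq_pos (v := v) hd)
  rw [characteristicAngle, cos_add, sin_arctan_div hu, cos_arctan_div hu, sin_arctan_div hs,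
    cos_arctan_div hs, sq_add_sqrt_sq_add_sq_sub_sq hd]
  field_simp
  rw [sq_sqrt (by positivity)]
  ring

lemma cos_characteristicAngle_ne_zero (hu : 0 < u) (hd : d ^ 2 < u ^ 2) :
    cos (characteristicAngle d u v) ≠ 0 := by
  set s := √(u ^ 2 + v ^ 2 - d ^ 2)
  have hs2 : s ^ 2 = u ^ 2 + v ^ 2 - d ^ 2 := sq_sqrt (sq_add_sq_sub_sq_pos hd).le
  rw [cos_characteristicAngle hu hd, div_ne_zero_iff, sub_ne_zero]
  refine ⟨fun h => ?_, by positivity⟩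
  -- squaring `u s = v d` gives `(u² - d²)(u² + v²) = 0`
  have : (u ^ 2 - d ^ 2) * (u ^ 2 + v ^ 2) = 0 := by
    linear_combination (u * s + v * d) * h - u ^ 2 * hs2
  nlinarith [mul_pos (sub_pos.2 hd) (show 0 < u ^ 2 + v ^ 2 by positivity)]

lemma hasDerivAt_characteristicAngle_fst (hu : 0 < u) (hd : d ^ 2 < u ^ 2) :
    HasDerivAt (fun u' => characteristicAngle d u' v)
      (-sin (characteristicAngle d u v) / √(u ^ 2 + v ^ 2 - d ^ 2)) u := by
  have hpos := sq_add_sq_sub_sq_pos (v := v) hd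
  have hs := sqrt_pos.2 hpos
  have hsqrt : HasDerivAt (fun u' => √(u' ^ 2 + v ^ 2 - d ^ 2))
      (u / √(u ^ 2 + v ^ 2 - d ^ 2)) u := by
    convert (((hasDerivAt_pow 2 u).add_const (v ^ 2)).sub_const (d ^ 2)).sqrt hpos.ne' using 1
    field_simp
    ring
  refine HasDerivAt.congr_deriv (f := fun u' => characteristicAngle d u' v)
    (((hasDerivAt_const u v).arctan_div (hasDerivAt_id' u) hu.ne').add
      ((hasDerivAt_const u d).arctan_div hsqrt hs.ne')) ?_
  rw [sin_characteristicAngle hu hd, sq_add_sqrt_sq_add_sq_sub_sq hd]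
  have hq : v ^ 2 + u ^ 2 ≠ 0 := by positivity
  field_simp
  ring

lemma hasDerivAt_characteristicAngle_snd (hu : 0 < u) (hd : d ^ 2 < u ^ 2) :
    HasDerivAt (fun v' => characteristicAngle d u v')
      (cos (characteristicAngle d u v) / √(u ^ 2 + v ^ 2 - d ^ 2)) v := by
  have hpos := sq_add_sq_sub_sq_pos (v := v) hd
  have hs := sqrt_pos.2 hpos
  have hsqrt : HasDerivAt (fun v' => √(u ^ 2 + v' ^ 2 - d ^ 2))
      (v / √(u ^ 2 + v ^ 2 - d ^ 2)) v := by
    convert (((hasDerivAt_pow 2 v).const_add (u ^ 2)).sub_const (d ^ 2)).sqrt hpos.ne' using 1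
    field_simp
    ring
  refine HasDerivAt.congr_deriv (f := fun v' => characteristicAngle d u v')
    (((hasDerivAt_id' v).arctan_div (hasDerivAt_const v u) hu.ne').add
      ((hasDerivAt_const v d).arctan_div hsqrt hs.ne')) ?_
  rw [cos_characteristicAngle hu hd, sq_add_sqrt_sq_add_sq_sub_sq hd]
  have hq : v ^ 2 + u ^ 2 ≠ 0 := by positivity
  field_simp
  ring

end characteristicAngle

/-- Partial derivatives of `λⱼ(u,v) = tan (arctan (v/u) + e · arctan (c/√(u²+v²-c²)))`
(`e = (-1)^{σ(j)} ∈ {1, -1}`, `c > 0` fixed) in the region `u > c > 0`: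
`∂λⱼ/∂u = -sec²(Θ) sin(Θ)/√(q²-c²)` and `∂λⱼ/∂v = sec²(Θ) cos(Θ)/√(q²-c²)`,
where `Θ = arctan (v/u) + e · arctan (c/√(u²+v²-c²))`. -/
theorem lambda_partial_derivatives (c u v e : ℝ)
    (hc : 0 < c) (hu : c < u) (he : e = 1 ∨ e = -1) :
    HasDerivAt
      (fun u' : ℝ => Real.tan (Real.arctan (v / u') +
        e * Real.arctan (c / Real.sqrt (u' ^ 2 + v ^ 2 - c ^ 2))))
      (-(1 / (Real.cos (Real.arctan (v / u) +
          e * Real.arctan (c / Real.sqrt (u ^ 2 + v ^ 2 - c ^ 2)))) ^ 2 *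
        Real.sin (Real.arctan (v / u) +
          e * Real.arctan (c / Real.sqrt (u ^ 2 + v ^ 2 - c ^ 2)))) /
        Real.sqrt (u ^ 2 + v ^ 2 - c ^ 2)) u ∧
    HasDerivAt
      (fun v' : ℝ => Real.tan (Real.arctan (v' / u) +
        e * Real.arctan (c / Real.sqrt (u ^ 2 + v' ^ 2 - c ^ 2))))
      ((1 / (Real.cos (Real.arctan (v / u) +
          e * Real.arctan (c / Real.sqrt (u ^ 2 + v ^ 2 - c ^ 2)))) ^ 2 *
        Real.cos (Real.arctan (v / u) +
          e * Real.arctan (c / Real.sqrt (u ^ 2 + v ^ 2 - c ^ 2)))) /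
        Real.sqrt (u ^ 2 + v ^ 2 - c ^ 2)) v := by
  have hu0 : 0 < u := hc.trans hu
  have hec : (e * c) ^ 2 = c ^ 2 := by rcases he with rfl | rfl <;> ring
  have hd : (e * c) ^ 2 < u ^ 2 := hec ▸ pow_lt_pow_left₀ hu hc.le two_ne_zero
  have hΘ : ∀ u' v' : ℝ, arctan (v' / u') + e * arctan (c / √(u' ^ 2 + v' ^ 2 - c ^ 2)) =
      characteristicAngle (e * c) u' v' := fun u' v' => by
    rw [characteristicAngle, mul_arctan_of_eq_one_or_eq_neg_one he, hec, mul_div_assoc]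
  simp only [hΘ]
  constructor
  · convert (hasDerivAt_characteristicAngle_fst hu0 hd).tan
      (cos_characteristicAngle_ne_zero hu0 hd) using 1
    rw [hec]
    ring
  · convert (hasDerivAt_characteristicAngle_snd hu0 hd).tan
      (cos_characteristicAngle_ne_zero hu0 hd) using 1
    rw [hec]
    ring
end

section
/- In the notation of the reflection lemma: at α₁ = 0 and U_r = U₋, the reflection coefficient equals K_{b₁} = −k₁(λ₁(U₋) − v₋/u₋) / (k₃(λ₃(U₋) − v₋/u₋)), and this quantity is strictly positive. -/
/-!
With `s = √(u² + v² − c²)`, the identity `u² s² − v² c² = (u² − c²)(u² + v²)` gives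
`|v c| < u s` for a supersonic state. This one inequality does everything: it makes
`λ₁ − v/u` negative and `λ₃ − v/u` positive, and, since
`cos (arctan a ± arctan b) = (1 ∓ a b) / (√(1 + a²) √(1 + b²))`, it makes both
`cos (θ ∓ θ_ma)` positive, where `tan θ = v/u` and `tan θ_ma = c/s`.
-/

open Real

theorem cos_arctan_add_arctan_pos {a b : ℝ} (h : |a * b| < 1) :
    0 < cos (arctan a + arctan b) := by
  rw [cos_add, cos_arctan, cos_arctan, sin_arctan, sin_arctan, div_mul_div_comm,
    div_mul_div_comm, div_sub_div_same]
  have hab : a * b < 1 := (abs_lt.mp h).2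
  exact div_pos (by linarith) (by positivity)

theorem cos_arctan_sub_arctan_pos {a b : ℝ} (h : |a * b| < 1) :
    0 < cos (arctan a - arctan b) := by
  rw [sub_eq_add_neg, ← arctan_neg]
  exact cos_arctan_add_arctan_pos (by rwa [mul_neg, abs_neg])

namespace SteadyEuler

variable (γ u v c : ℝ)

noncomputable def sqrtSpeedSqSubSoundSq : ℝ := √((u ^ 2 + v ^ 2) - c ^ 2)

noncomputable def flowAngle : ℝ := arctan (v / u)

noncomputable def machAngle : ℝ := arctan (c / sqrtSpeedSqSubSoundSq u v c)

noncomputable def charSpeed₁ : ℝ :=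
  (u * v - c * sqrtSpeedSqSubSoundSq u v c) / (u ^ 2 - c ^ 2)

noncomputable def charSpeed₃ : ℝ :=
  (u * v + c * sqrtSpeedSqSubSoundSq u v c) / (u ^ 2 - c ^ 2)

noncomputable def k₁ : ℝ :=
  2 * sqrtSpeedSqSubSoundSq u v c * (cos (flowAngle u v - machAngle u v c)) ^ 3 / (γ + 1)

noncomputable def k₃ : ℝ :=
  2 * sqrtSpeedSqSubSoundSq u v c * (cos (flowAngle u v + machAngle u v c)) ^ 3 / (γ + 1)

variable {γ u v c}

theorem sqrtSpeedSqSubSoundSq_pos (hc : 0 < c) (hcu : c < u) :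
    0 < sqrtSpeedSqSubSoundSq u v c :=
  sqrt_pos.mpr (by nlinarith)

theorem abs_mul_lt_mul_sqrtSpeedSqSubSoundSq (hc : 0 < c) (hcu : c < u) :
    |v * c| < u * sqrtSpeedSqSubSoundSq u v c := by
  have hs := sqrtSpeedSqSubSoundSq_pos (v := v) hc hcu
  have hs2 : sqrtSpeedSqSubSoundSq u v c ^ 2 = (u ^ 2 + v ^ 2) - c ^ 2 :=
    sq_sqrt (by nlinarith)
  have key : (u * sqrtSpeedSqSubSoundSq u v c) ^ 2 - (v * c) ^ 2
      = (u ^ 2 - c ^ 2) * (u ^ 2 + v ^ 2) := by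
    rw [mul_pow, hs2]; ring
  have hpos : 0 < (u ^ 2 - c ^ 2) * (u ^ 2 + v ^ 2) :=
    mul_pos (by nlinarith) (by nlinarith)
  exact abs_lt_of_sq_lt_sq (by linarith) (mul_pos (hc.trans hcu) hs).le

theorem abs_tan_flowAngle_mul_tan_machAngle_lt_one (hc : 0 < c) (hcu : c < u) :
    |v / u * (c / sqrtSpeedSqSubSoundSq u v c)| < 1 := by
  have hus := mul_pos (hc.trans hcu) (sqrtSpeedSqSubSoundSq_pos (v := v) hc hcu)
  rw [div_mul_div_comm, abs_div, abs_of_pos hus, div_lt_one hus]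
  exact abs_mul_lt_mul_sqrtSpeedSqSubSoundSq hc hcu

theorem k₁_pos (hγ : 0 < γ + 1) (hc : 0 < c) (hcu : c < u) : 0 < k₁ γ u v c := by
  have := sqrtSpeedSqSubSoundSq_pos (v := v) hc hcu
  have := cos_arctan_sub_arctan_pos (abs_tan_flowAngle_mul_tan_machAngle_lt_one (v := v) hc hcu)
  unfold k₁ flowAngle machAngle
  positivity

theorem k₃_pos (hγ : 0 < γ + 1) (hc : 0 < c) (hcu : c < u) : 0 < k₃ γ u v c := by
  have := sqrtSpeedSqSubSoundSq_pos (v := v) hc hcu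
  have := cos_arctan_add_arctan_pos (abs_tan_flowAngle_mul_tan_machAngle_lt_one (v := v) hc hcu)
  unfold k₃ flowAngle machAngle
  positivity

theorem charSpeed₁_sub_eq (hc : 0 < c) (hcu : c < u) :
    charSpeed₁ u v c - v / u
      = -(c * (u * sqrtSpeedSqSubSoundSq u v c - v * c)) / (u * (u ^ 2 - c ^ 2)) := by
  have hu : u ≠ 0 := (hc.trans hcu).ne'
  have huc : u ^ 2 - c ^ 2 ≠ 0 := by nlinarith
  unfold charSpeed₁
  field_simp
  ring

theorem charSpeed₃_sub_eq (hc : 0 < c) (hcu : c < u) :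
    charSpeed₃ u v c - v / u
      = c * (u * sqrtSpeedSqSubSoundSq u v c + v * c) / (u * (u ^ 2 - c ^ 2)) := by
  have hu : u ≠ 0 := (hc.trans hcu).ne'
  have huc : u ^ 2 - c ^ 2 ≠ 0 := by nlinarith
  unfold charSpeed₃
  field_simp
  ring

theorem charSpeed₁_sub_neg (hc : 0 < c) (hcu : c < u) : charSpeed₁ u v c - v / u < 0 := by
  have hvc := abs_lt.mp (abs_mul_lt_mul_sqrtSpeedSqSubSoundSq (v := v) hc hcu)
  have : 0 < u * (u ^ 2 - c ^ 2) := mul_pos (hc.trans hcu) (by nlinarith)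
  rw [charSpeed₁_sub_eq hc hcu]
  exact div_neg_of_neg_of_pos (neg_neg_of_pos (mul_pos hc (by linarith))) this

theorem charSpeed₃_sub_pos (hc : 0 < c) (hcu : c < u) : 0 < charSpeed₃ u v c - v / u := by
  have hvc := abs_lt.mp (abs_mul_lt_mul_sqrtSpeedSqSubSoundSq (v := v) hc hcu)
  have : 0 < u * (u ^ 2 - c ^ 2) := mul_pos (hc.trans hcu) (by nlinarith)
  rw [charSpeed₃_sub_eq hc hcu]
  exact div_pos (mul_pos hc (by linarith)) this

end SteadyEuler

open SteadyEuler in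
theorem reflection_coefficient_positive_general (γ u v c : ℝ)
    (hγ : 1 < γ) (hc0 : 0 < c) (hsup : c < u) :
    0 < -(2 * Real.sqrt ((u ^ 2 + v ^ 2) - c ^ 2) *
          (Real.cos (Real.arctan (v / u) -
            Real.arctan (c / Real.sqrt ((u ^ 2 + v ^ 2) - c ^ 2)))) ^ 3 / (γ + 1) *
          ((u * v - c * Real.sqrt ((u ^ 2 + v ^ 2) - c ^ 2)) / (u ^ 2 - c ^ 2)
            - v / u)) /
        (2 * Real.sqrt ((u ^ 2 + v ^ 2) - c ^ 2) *
          (Real.cos (Real.arctan (v / u) +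
            Real.arctan (c / Real.sqrt ((u ^ 2 + v ^ 2) - c ^ 2)))) ^ 3 / (γ + 1) *
          ((u * v + c * Real.sqrt ((u ^ 2 + v ^ 2) - c ^ 2)) / (u ^ 2 - c ^ 2)
            - v / u)) := by
  show 0 < -(k₁ γ u v c * (charSpeed₁ u v c - v / u)) /
    (k₃ γ u v c * (charSpeed₃ u v c - v / u))
  have hγ1 : 0 < γ + 1 := by linarith
  have numerator_pos : 0 < -(k₁ γ u v c * (charSpeed₁ u v c - v / u)) :=
    neg_pos.mpr (mul_neg_of_pos_of_neg (k₁_pos hγ1 hc0 hsup) (charSpeed₁_sub_neg hc0 hsup))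
  exact div_pos numerator_pos (mul_pos (k₃_pos hγ1 hc0 hsup) (charSpeed₃_sub_pos hc0 hsup))

/-- Positivity of the reflection coefficient: at a supersonic state
`U₋ = (u,v,p,ρ)` (`u > c > 0`), the quantity
`K_{b₁} = −k₁(λ₁ − v/u) / (k₃(λ₃ − v/u))` is strictly positive, where
`λ₁, λ₃` are the first/third characteristic speeds and
`kⱼ = 2√(q²−c²) cos³(θ ∓ θ_ma)/(γ+1)` the positive normalization constants. -/
theorem reflection_coefficient_positive (γ u v p ρ c : ℝ)
    (hγ : 1 < γ) (hp : 0 < p) (hρ : 0 < ρ)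
    (hc : c = Real.sqrt (γ * p / ρ)) (hc0 : 0 < c) (hsup : c < u) :
    0 < -(2 * Real.sqrt ((u ^ 2 + v ^ 2) - c ^ 2) *
          (Real.cos (Real.arctan (v / u) -
            Real.arctan (c / Real.sqrt ((u ^ 2 + v ^ 2) - c ^ 2)))) ^ 3 / (γ + 1) *
          ((u * v - c * Real.sqrt ((u ^ 2 + v ^ 2) - c ^ 2)) / (u ^ 2 - c ^ 2)
            - v / u)) /
        (2 * Real.sqrt ((u ^ 2 + v ^ 2) - c ^ 2) *
          (Real.cos (Real.arctan (v / u) +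
            Real.arctan (c / Real.sqrt ((u ^ 2 + v ^ 2) - c ^ 2)))) ^ 3 / (γ + 1) *
          ((u * v + c * Real.sqrt ((u ^ 2 + v ^ 2) - c ^ 2)) / (u ^ 2 - c ^ 2)
            - v / u)) :=
  reflection_coefficient_positive_general γ u v c hγ hc0 hsup
end

section
/- Suppose at an interaction time τ a strong 3-rarefaction front s > 0 interacts with a 1-weak front α₁, producing γ₁ = α₁ + O(1)|α₁||s| and a new rarefaction front s' = s + O(1)|α₁||s|, and let W(α,x) = exp(K_ω · Σ{strengths of strong rarefaction fronts below α at time x}). Then |γ₁|·W(γ₁,τ+) − |α₁|·W(α₁,τ−) ≤ |α₁||s|·W(α₁,τ−)·(−K_ω/2 + C₁), provided K_ω·s < 1 and the O(1) bounds are at most C₁. -/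
lemma exp_neg_le (x : ℝ) (h0 : 0 < x) (h1 : x < 1) :
    Real.exp (-x) ≤ 1 - x / 2 := by
  have h2 : (1 : ℝ) + x ≤ Real.exp x := by linarith [Real.add_one_le_exp x]
  have hx : 0 < 1 + x := by linarith
  have : Real.exp (-x) = (Real.exp x)⁻¹ := Real.exp_neg x
  rw [this]
  have h3 : (Real.exp x)⁻¹ ≤ (1 + x)⁻¹ := by
    apply inv_anti₀ hx h2
  have h4 : (1 + x)⁻¹ ≤ 1 - x / 2 := by
    rw [inv_le_iff_one_le_mul₀ hx]
    nlinarith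
  linarith

/-- Key weighted estimate when a weak 1-front `α₁` crosses a strong
3-rarefaction front `s`: with `γ₁ = α₁ + O(1)|α₁||s|` (`|O(1)| ≤ C₁`),
`W(γ₁,τ+)·e^{K_ω s} = W(α₁,τ−)` and `K_ω s < 1`, one has
`|γ₁| W(γ₁,τ+) − |α₁| W(α₁,τ−) ≤ |α₁||s| W(α₁,τ−)(−K_ω/2 + C₁)`. -/
theorem weighted_crossing_estimate (α₁ s Kω C₁ Wm γ₁ : ℝ)
    (hα : 0 ≤ α₁) (hs : 0 < s) (hK : 0 < Kω) (hC : 0 < C₁)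
    (hKs : Kω * s < 1) (hW : 0 < Wm)
    (hγ : |γ₁ - α₁| ≤ C₁ * α₁ * s) :
    |γ₁| * (Wm * Real.exp (-(Kω * s))) - α₁ * Wm
      ≤ α₁ * s * Wm * (-(Kω / 2) + C₁) := by
  have hγle : |γ₁| ≤ α₁ + C₁ * α₁ * s := by
    have := abs_sub_abs_le_abs_sub γ₁ α₁
    rw [abs_of_nonneg hα] at this
    linarith
  have hKs0 : 0 < Kω * s := mul_pos hK hs
  have hexp : Real.exp (-(Kω * s)) ≤ 1 - Kω * s / 2 := exp_neg_le _ hKs0 hKs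
  have hexp0 : 0 < Real.exp (-(Kω * s)) := Real.exp_pos _
  have hexp1 : Real.exp (-(Kω * s)) ≤ 1 := by
    rw [Real.exp_le_one_iff]; linarith
  set E := Real.exp (-(Kω * s)) with hE
  have h1 : |γ₁| * (Wm * E) ≤ (α₁ + C₁ * α₁ * s) * (Wm * E) :=
    mul_le_mul_of_nonneg_right hγle (mul_pos hW hexp0).le
  have h2 : α₁ * Wm * E ≤ α₁ * Wm * (1 - Kω * s / 2) :=
    mul_le_mul_of_nonneg_left hexp (mul_nonneg hα hW.le)
  have h3 : C₁ * α₁ * s * Wm * E ≤ C₁ * α₁ * s * Wm * 1 :=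
    mul_le_mul_of_nonneg_left hexp1
      (by positivity)
  nlinarith [h1, h2, h3]
end
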